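/- arXiv:1409.8532 — 2 statements merged into one kernel-verified Lean document; each statement's English description precedes it below -/
import Mathlib

section
/- Let H ∈ (1/2,1). There exists a constant C > 0, independent of n, such that for every n ≥ 1, every f : ℝ → ℝ continuously differentiable with bounded derivative, and all 0 ≤ t_1 ≤ t_2, the empirical spectral measures of the n×n matrix fractional Brownian motion satisfy E[ |⟨μ_{t_2}^{(n)}, f⟩ − ⟨μ_{t_1}^{(n)}, f⟩|⁴ ] ≤ C ‖f′‖_∞⁴ |t_2 − t_1|^{4H}. -/
open MeasureTheory ProbabilityTheory Filter Topology Real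
open scoped ENNReal NNReal

noncomputable section

/-- The fractional Brownian motion covariance `R_H(t,s) = ((t^{2H} + s^{2H} - |t-s|^{2H})/2`. -/
def RH (H t s : ℝ) : ℝ := (t ^ (2 * H) + s ^ (2 * H) - |t - s| ^ (2 * H)) / 2

/-- `b` is a fractional Brownian motion with Hurst parameter `H` on the probability space
`(Ω, P)`: it has continuous sample paths on `[0,∞)` and its finite-dimensional distributions
are centered Gaussian with covariance `R_H`, expressed via one-dimensional marginals of all
linear combinations. -/
def IsFBM {Ω : Type*} [MeasurableSpace Ω] (H : ℝ) (P : Measure Ω) (b : Ω → ℝ → ℝ) : Prop :=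
  (∀ ω, ContinuousOn (b ω) (Set.Ici 0)) ∧
  (∀ t : ℝ, Measurable fun ω => b ω t) ∧
  ∀ (m : ℕ) (t : Fin m → ℝ), (∀ i, 0 ≤ t i) → ∀ c : Fin m → ℝ,
    P.map (fun ω => ∑ i, c i * b ω (t i)) =
      gaussianReal 0 (∑ i, ∑ j, c i * c j * RH H (t i) (t j)).toNNReal

/-- The entries `b i j`, `i ≤ j`, form a family of independent fractional Brownian motions
with Hurst parameter `H`. -/
def IsMatrixFBM {Ω : Type*} [MeasurableSpace Ω] (H : ℝ) (n : ℕ) (P : Measure Ω)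
    (b : Fin n → Fin n → Ω → ℝ → ℝ) : Prop :=
  (∀ i j : Fin n, i ≤ j → IsFBM H P (b i j)) ∧
  iIndepFun (m := fun _ : {q : Fin n × Fin n // q.1 ≤ q.2} => (MeasurableSpace.pi :
      MeasurableSpace (ℝ → ℝ)))
    (fun p ω => fun t : ℝ => b p.1.1 p.1.2 ω t) P

/-- The renormalized symmetric matrix fractional Brownian motion
`B^{(n)}(t) = B(t)/√n` with `B_{ij} = b_{ij}` for `i < j` and `B_{ii} = √2 b_{ii}`. -/
def fbmMatrix {Ω : Type*} (n : ℕ) (b : Fin n → Fin n → Ω → ℝ → ℝ) (ω : Ω) (t : ℝ) :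
    Matrix (Fin n) (Fin n) ℝ :=
  (Real.sqrt n)⁻¹ • Matrix.of fun i j =>
    if i = j then Real.sqrt 2 * b i i ω t
    else if i < j then b i j ω t else b j i ω t

/-- The eigenvalues of a symmetric real matrix, listed in increasing order
(junk value `0` if the matrix is not symmetric). -/
def eigs {n : ℕ} (A : Matrix (Fin n) (Fin n) ℝ) : Fin n → ℝ :=
  if hA : A.IsHermitian then hA.eigenvalues ∘ Tuple.sort hA.eigenvalues else 0

/-- The empirical spectral measure `(1/n) ∑ δ_{λ_i(A)}` of a symmetric real matrix. -/
def empMeasure {n : ℕ} (A : Matrix (Fin n) (Fin n) ℝ) : Measure ℝ :=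
  (n : ℝ≥0∞)⁻¹ • ∑ i : Fin n, Measure.dirac (eigs A i)

/-- The semicircle law of variance `v > 0`, with density
`x ↦ √(4v - x²)/(2πv)` on `[-2√v, 2√v]`; for `v ≤ 0` it is `δ₀`. -/
def semicircle (v : ℝ) : Measure ℝ :=
  if v ≤ 0 then Measure.dirac 0
  else volume.withDensity
    (Set.indicator (Set.Icc (-(2 * Real.sqrt v)) (2 * Real.sqrt v))
      (fun x => ENNReal.ofReal (Real.sqrt (4 * v - x ^ 2) / (2 * Real.pi * v))))

/-- The difference-quotient kernel `(f'(x)-f'(y))/(x-y)`, interpreted as `f''(x)` on the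
diagonal. -/
def dq (f' f'' : ℝ → ℝ) (x y : ℝ) : ℝ := if x = y then f'' x else (f' x - f' y) / (x - y)

/-- The measure-valued evolution equation (⋆): for every `f ∈ C_b²(ℝ)` and `t ≥ 0`,
`⟨ν_t, f⟩ = f(0) + H ∫_0^t s^{2H-1} ∫∫ ((f'(x)-f'(y))/(x-y)) ν_s(dx) ν_s(dy) ds`. -/
def SatisfiesStar (H : ℝ) (ν : ℝ → Measure ℝ) : Prop :=
  ∀ f f' f'' : ℝ → ℝ,
    (∀ x, HasDerivAt f (f' x) x) → (∀ x, HasDerivAt f' (f'' x) x) → Continuous f'' →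
    (∃ C, ∀ x, |f x| ≤ C) → (∃ C, ∀ x, |f' x| ≤ C) → (∃ C, ∀ x, |f'' x| ≤ C) →
    ∀ t : ℝ, 0 ≤ t →
      ∫ x, f x ∂(ν t) =
        f 0 + H * ∫ s in Set.Ioc (0 : ℝ) t,
          s ^ (2 * H - 1) * ∫ x, ∫ y, dq f' f'' x y ∂(ν s) ∂(ν s)

/-- The time-indexed path of measures associated to a continuous `ProbabilityMeasure`-valued
path indexed by `ℝ≥0`. -/
def pathMeasure (μ : C(ℝ≥0, ProbabilityMeasure ℝ)) : ℝ → Measure ℝ :=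
  fun s => (μ (Real.toNNReal s) : Measure ℝ)

/-- The Cauchy–Stieltjes transform of the semicircle law of variance `v`. -/
def scTransform (v : ℝ) (z : ℂ) : ℂ := ∫ x : ℝ, ((x : ℂ) - z)⁻¹ ∂(semicircle v)

/-! Diagonalising `A = U diag(λ) Uᵀ` and `B = V diag(μ) Vᵀ` with sorted eigenvalues gives
`‖A - B‖²_F = ∑ᵢⱼ Wᵢⱼ² (λᵢ - μⱼ)²` for the orthogonal matrix `W = Uᵀ V`. The matrix `(Wᵢⱼ²)` is
doubly stochastic, so by Birkhoff's theorem this sum is at least `∑ᵢ (λᵢ - μ_{σ i})²` for some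
permutation `σ`, hence by the rearrangement inequality at least `∑ᵢ (λᵢ - μᵢ)²`
(Hoffman–Wielandt). As `f` is `M`-Lipschitz, Cauchy–Schwarz then bounds the fourth power of the
increment of `⟨μₜ, f⟩` by `M⁴ ∑ᵢⱼ (B⁽ⁿ⁾ᵢⱼ(t₂) - B⁽ⁿ⁾ᵢⱼ(t₁))⁴`. Each entry increment is a multiple
`c · (bₖₗ(t₂) - bₖₗ(t₁))` with `c⁴ ≤ 4 / n²`, a centred Gaussian of variance `c² (t₂ - t₁)^{2H}`,
so the `n²` fourth moments add up to at most `4 E[N(0,1)⁴] M⁴ (t₂ - t₁)^{4H}`.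
-/

section Frobenius

open Matrix

variable {ι : Type*} [Fintype ι]

def frobSq {κ : Type*} [Fintype κ] (M : Matrix ι κ ℝ) : ℝ := ∑ i, ∑ j, M i j ^ 2

lemma frobSq_eq_trace {κ : Type*} [Fintype κ] (M : Matrix ι κ ℝ) :
    frobSq M = trace (Mᴴ * M) := by
  simp only [frobSq, trace, diag, mul_apply, conjTranspose_apply, star_trivial, sq]
  exact Finset.sum_comm

lemma frobSq_sq_le_card_mul {κ : Type*} [Fintype κ] (M : Matrix ι κ ℝ) :
    frobSq M ^ 2 ≤ Fintype.card ι * Fintype.card κ * ∑ i, ∑ j, M i j ^ 4 := by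
  calc frobSq M ^ 2 ≤ Fintype.card ι * ∑ i, (∑ j, M i j ^ 2) ^ 2 :=
        sq_sum_le_card_mul_sum_sq
    _ ≤ Fintype.card ι * ∑ i, Fintype.card κ * ∑ j, (M i j ^ 2) ^ 2 := by
        gcongr; exact sq_sum_le_card_mul_sum_sq
    _ = Fintype.card ι * Fintype.card κ * ∑ i, ∑ j, M i j ^ 4 := by
        simp only [← pow_mul, Finset.mul_sum, mul_assoc]

lemma Monovary.sum_sub_sq_le_sum_sub_comp_perm_sq {u v : ι → ℝ} (huv : Monovary u v)
    (σ : Equiv.Perm ι) : ∑ i, (u i - v i) ^ 2 ≤ ∑ i, (u i - v (σ i)) ^ 2 := by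
  have hcross : ∑ i, u i * v (σ i) ≤ ∑ i, u i * v i := huv.sum_mul_comp_perm_le_sum_mul
  have hsq : ∑ i, v (σ i) ^ 2 = ∑ i, v i ^ 2 := Equiv.sum_comp σ (v · ^ 2)
  simp only [sub_sq, Finset.sum_add_distrib, Finset.sum_sub_distrib, mul_assoc,
    ← Finset.mul_sum, hsq]
  linarith

variable [DecidableEq ι]

lemma frobSq_mul_mul_star {U V : Matrix ι ι ℝ} (hU : U ∈ unitaryGroup ι ℝ)
    (hV : V ∈ unitaryGroup ι ℝ) (M : Matrix ι ι ℝ) :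
    frobSq (U * M * star V) = frobSq M := by
  have hUU : star U * U = 1 := mem_unitaryGroup_iff'.mp hU
  have hVV : star V * V = 1 := mem_unitaryGroup_iff'.mp hV
  have hconj : star (U * M * star V) * (U * M * star V) = V * (star M * M) * star V := by
    simp only [star_mul, star_star, Matrix.mul_assoc]
    rw [← Matrix.mul_assoc (star U) U, hUU, Matrix.one_mul]
  rw [frobSq_eq_trace, frobSq_eq_trace, ← star_eq_conjTranspose, ← star_eq_conjTranspose, hconj,
    trace_mul_cycle, ← Matrix.mul_assoc, hVV, Matrix.one_mul]

lemma frobSq_sub_eq_sum {A B U V : Matrix ι ι ℝ} {a b : ι → ℝ} (hU : U ∈ unitaryGroup ι ℝ)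
    (hV : V ∈ unitaryGroup ι ℝ) (hA : A = U * diagonal a * star U)
    (hB : B = V * diagonal b * star V) :
    frobSq (A - B) = ∑ i, ∑ j, (star U * V) i j ^ 2 * (a i - b j) ^ 2 := by
  have hUU : U * star U = 1 := mem_unitaryGroup_iff.mp hU
  have hVV : V * star V = 1 := mem_unitaryGroup_iff.mp hV
  have hAB : A - B = U * (diagonal a * (star U * V) - (star U * V) * diagonal b) * star V := by
    rw [hA, hB]
    simp only [mul_sub, sub_mul, ← mul_assoc, hUU, one_mul]
    simp only [mul_assoc, hVV, mul_one]
  rw [hAB, frobSq_mul_mul_star hU hV]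
  simp only [frobSq, Matrix.sub_apply, diagonal_mul, mul_diagonal]
  congr! 2 with i - j -
  ring

lemma of_sq_mem_doublyStochastic {W : Matrix ι ι ℝ} (hW : W ∈ unitaryGroup ι ℝ) :
    of (fun i j => W i j ^ 2) ∈ doublyStochastic ℝ ι := by
  have hrow := congrFun₂ (mem_unitaryGroup_iff.mp hW)
  have hcol := congrFun₂ (mem_unitaryGroup_iff'.mp hW)
  simp only [mul_apply, star_apply, star_trivial] at hrow hcol
  refine mem_doublyStochastic_iff_sum.mpr ⟨fun i j => sq_nonneg _, fun i => ?_, fun j => ?_⟩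
  · simpa [sq] using hrow i i
  · simpa [sq] using hcol j j

lemma exists_perm_sum_le_of_mem_doublyStochastic {S : Matrix ι ι ℝ}
    (hS : S ∈ doublyStochastic ℝ ι) (c : ι → ι → ℝ) :
    ∃ σ : Equiv.Perm ι, ∑ i, c i (σ i) ≤ ∑ i, ∑ j, S i j * c i j := by
  have hconc : ConcaveOn ℝ Set.univ fun S : Matrix ι ι ℝ => ∑ i, ∑ j, S i j * c i j :=
    ⟨convex_univ, fun S _ T _ s t _ _ _ => by
      simp only [Matrix.add_apply, Matrix.smul_apply, smul_eq_mul, add_mul,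
        Finset.sum_add_distrib, Finset.mul_sum, mul_assoc, le_refl]⟩
  -- Birkhoff: a concave function on the doubly stochastic matrices is minimised at a permutation.
  rw [← SetLike.mem_coe, doublyStochastic_eq_convexHull_permMatrix] at hS
  obtain ⟨_, ⟨σ, rfl⟩, hσ⟩ := hconc.exists_le_of_mem_convexHull (Set.subset_univ _) hS
  refine ⟨σ, le_of_eq_of_le ?_ hσ⟩
  simp [Equiv.Perm.permMatrix, PEquiv.toMatrix_apply, ite_mul]

end Frobenius

section SortedSpectrum

open Matrix

variable {n : ℕ}

lemma eigs_monotone {A : Matrix (Fin n) (Fin n) ℝ} (hA : A.IsHermitian) : Monotone (eigs A) := by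
  rw [eigs, dif_pos hA]
  exact Tuple.monotone_sort _

lemma Matrix.IsHermitian.exists_mem_unitaryGroup_eq_diagonal_eigs {A : Matrix (Fin n) (Fin n) ℝ}
    (hA : A.IsHermitian) : ∃ U ∈ unitaryGroup (Fin n) ℝ, A = U * diagonal (eigs A) * star U := by
  set U : Matrix (Fin n) (Fin n) ℝ := ↑hA.eigenvectorUnitary
  have hU : U ∈ unitaryGroup (Fin n) ℝ := SetLike.coe_mem _
  have hspec : A = U * diagonal hA.eigenvalues * star U := by
    simpa [RCLike.ofReal_real_eq_id] using hA.spectral_theorem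
  refine ⟨U.submatrix id (Tuple.sort hA.eigenvalues), ?_, ?_⟩
  · rw [mem_unitaryGroup_iff, star_eq_conjTranspose, conjTranspose_submatrix, submatrix_mul_equiv,
      ← star_eq_conjTranspose, mem_unitaryGroup_iff.mp hU, submatrix_id_id]
  · rw [eigs, dif_pos hA, ← submatrix_diagonal_equiv, star_eq_conjTranspose,
      conjTranspose_submatrix, submatrix_mul_equiv, submatrix_mul_equiv, ← star_eq_conjTranspose,
      submatrix_id_id, ← hspec]

theorem hoffman_wielandt {A B : Matrix (Fin n) (Fin n) ℝ} (hA : A.IsHermitian)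
    (hB : B.IsHermitian) : ∑ i, (eigs A i - eigs B i) ^ 2 ≤ frobSq (A - B) := by
  obtain ⟨U, hU, hAU⟩ := hA.exists_mem_unitaryGroup_eq_diagonal_eigs
  obtain ⟨V, hV, hBV⟩ := hB.exists_mem_unitaryGroup_eq_diagonal_eigs
  obtain ⟨σ, hσ⟩ := exists_perm_sum_le_of_mem_doublyStochastic
    (of_sq_mem_doublyStochastic (mul_mem (Unitary.star_mem hU) hV))
    fun i j => (eigs A i - eigs B j) ^ 2
  calc ∑ i, (eigs A i - eigs B i) ^ 2 ≤ ∑ i, (eigs A i - eigs B (σ i)) ^ 2 :=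
        ((eigs_monotone hA).monovary (eigs_monotone hB)).sum_sub_sq_le_sum_sub_comp_perm_sq σ
    _ ≤ _ := hσ
    _ = frobSq (A - B) := (frobSq_sub_eq_sum hU hV hAU hBV).symm

end SortedSpectrum

section LinearStatistics

lemma sq_sum_comp_sub_sum_comp_le {ι : Type*} [Fintype ι] {f f' : ℝ → ℝ}
    (hf : ∀ x, HasDerivAt f (f' x) x) {M : ℝ} (hM : ∀ x, |f' x| ≤ M) (u v : ι → ℝ) :
    (∑ i, f (u i) - ∑ i, f (v i)) ^ 2 ≤ M ^ 2 * (Fintype.card ι * ∑ i, (u i - v i) ^ 2) := by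
  have hM0 : 0 ≤ M := (abs_nonneg _).trans (hM 0)
  have hlip : ∀ x y, |f x - f y| ≤ M * |x - y| := fun x y => by
    simpa only [Real.norm_eq_abs] using Convex.norm_image_sub_le_of_norm_hasDerivWithin_le
      (fun z _ => (hf z).hasDerivWithinAt) (fun z _ => hM z) convex_univ
      (Set.mem_univ y) (Set.mem_univ x)
  have hsum : |∑ i, f (u i) - ∑ i, f (v i)| ≤ M * ∑ i, |u i - v i| := by
    rw [← Finset.sum_sub_distrib, Finset.mul_sum]
    exact (Finset.abs_sum_le_sum_abs _ _).trans (Finset.sum_le_sum fun i _ => hlip _ _)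
  calc (∑ i, f (u i) - ∑ i, f (v i)) ^ 2 ≤ (M * ∑ i, |u i - v i|) ^ 2 := by
        rw [← sq_abs]; gcongr
    _ ≤ M ^ 2 * (Fintype.card ι * ∑ i, (u i - v i) ^ 2) := by
        rw [mul_pow]; gcongr
        simpa only [sq_abs, Finset.card_univ] using
          sq_sum_le_card_mul_sum_sq (s := Finset.univ) (f := fun i => |u i - v i|)

variable {n : ℕ} {A B : Matrix (Fin n) (Fin n) ℝ}

lemma sq_linearStatistic_sub_le (hA : A.IsHermitian) (hB : B.IsHermitian) {f f' : ℝ → ℝ}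
    (hf : ∀ x, HasDerivAt f (f' x) x) {M : ℝ} (hM : ∀ x, |f' x| ≤ M) :
    ((n : ℝ)⁻¹ * ∑ i, f (eigs A i) - (n : ℝ)⁻¹ * ∑ i, f (eigs B i)) ^ 2
      ≤ M ^ 2 * (n : ℝ)⁻¹ * frobSq (A - B) := by
  calc ((n : ℝ)⁻¹ * ∑ i, f (eigs A i) - (n : ℝ)⁻¹ * ∑ i, f (eigs B i)) ^ 2
      = (n : ℝ)⁻¹ ^ 2 * (∑ i, f (eigs A i) - ∑ i, f (eigs B i)) ^ 2 := by ring
    _ ≤ (n : ℝ)⁻¹ ^ 2 * (M ^ 2 * (n * frobSq (A - B))) := by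
        gcongr
        refine (sq_sum_comp_sub_sum_comp_le hf hM _ _).trans ?_
        rw [Fintype.card_fin]
        gcongr
        exact hoffman_wielandt hA hB
    _ = M ^ 2 * (n : ℝ)⁻¹ * frobSq (A - B) := by
        rcases eq_or_ne (n : ℝ) 0 with hn | hn
        · simp [hn]
        · field_simp

lemma pow_four_linearStatistic_sub_le (hA : A.IsHermitian) (hB : B.IsHermitian)
    {f f' : ℝ → ℝ} (hf : ∀ x, HasDerivAt f (f' x) x) {M : ℝ} (hM : ∀ x, |f' x| ≤ M) :
    ((n : ℝ)⁻¹ * ∑ i, f (eigs A i) - (n : ℝ)⁻¹ * ∑ i, f (eigs B i)) ^ 4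
      ≤ ∑ i, ∑ j, (M * (A - B) i j) ^ 4 := by
  calc ((n : ℝ)⁻¹ * ∑ i, f (eigs A i) - (n : ℝ)⁻¹ * ∑ i, f (eigs B i)) ^ 4
      = (((n : ℝ)⁻¹ * ∑ i, f (eigs A i) - (n : ℝ)⁻¹ * ∑ i, f (eigs B i)) ^ 2) ^ 2 := by ring
    _ ≤ (M ^ 2 * (n : ℝ)⁻¹ * frobSq (A - B)) ^ 2 := by
        gcongr; exact sq_linearStatistic_sub_le hA hB hf hM
    _ = M ^ 4 * (n : ℝ)⁻¹ ^ 2 * frobSq (A - B) ^ 2 := by ring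
    _ ≤ M ^ 4 * (n : ℝ)⁻¹ ^ 2 * (n * n * ∑ i, ∑ j, (A - B) i j ^ 4) := by
        gcongr
        simpa only [Fintype.card_fin] using frobSq_sq_le_card_mul (A - B)
    _ = ∑ i, ∑ j, (M * (A - B) i j) ^ 4 := by
        simp only [mul_pow, ← Finset.mul_sum]
        rcases n.eq_zero_or_pos with rfl | hn
        · simp
        · field_simp

end LinearStatistics

lemma lintegral_pow_four_linearStatistic_sub_le {n : ℕ} {Ω : Type*} [MeasurableSpace Ω]
    {P : Measure Ω} {A B : Ω → Matrix (Fin n) (Fin n) ℝ} (hA : ∀ ω, (A ω).IsHermitian)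
    (hB : ∀ ω, (B ω).IsHermitian) (hAB : ∀ i j, Measurable fun ω => (A ω - B ω) i j)
    {f f' : ℝ → ℝ} (hf : ∀ x, HasDerivAt f (f' x) x) {M : ℝ} (hM : ∀ x, |f' x| ≤ M) :
    ∫⁻ ω, ENNReal.ofReal
        (|(n : ℝ)⁻¹ * ∑ i, f (eigs (A ω) i) - (n : ℝ)⁻¹ * ∑ i, f (eigs (B ω) i)| ^ 4) ∂P
      ≤ ∑ i, ∑ j, ∫⁻ ω, ENNReal.ofReal ((M * (A ω - B ω) i j) ^ 4) ∂P := by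
  have hmeas : ∀ i j, Measurable fun ω => ENNReal.ofReal ((M * (A ω - B ω) i j) ^ 4) :=
    fun i j => (((hAB i j).const_mul M).pow_const 4).ennreal_ofReal
  calc _ ≤ ∫⁻ ω, ∑ i, ∑ j, ENNReal.ofReal ((M * (A ω - B ω) i j) ^ 4) ∂P := by
        refine lintegral_mono fun ω => ?_
        rw [(by decide : Even 4).pow_abs]
        refine (ENNReal.ofReal_le_ofReal
          (pow_four_linearStatistic_sub_le (hA ω) (hB ω) hf hM)).trans_eq ?_
        rw [ENNReal.ofReal_sum_of_nonneg fun i _ => by positivity]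
        refine Finset.sum_congr rfl fun i _ => ?_
        rw [ENNReal.ofReal_sum_of_nonneg fun j _ => by positivity]
    _ = _ := by
        rw [lintegral_finsetSum _ fun i _ => Finset.measurable_sum _ fun j _ => hmeas i j]
        exact Finset.sum_congr rfl fun i _ => lintegral_finsetSum _ fun j _ => hmeas i j

section Gaussian

def gaussianFourthMoment : ℝ := ∫ x, x ^ 4 ∂gaussianReal 0 1

lemma integrable_pow_four_gaussianReal (μ : ℝ) (v : ℝ≥0) :
    Integrable (fun x : ℝ => x ^ 4) (gaussianReal μ v) := by
  simpa only [Real.norm_eq_abs, (by decide : Even 4).pow_abs, id] using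
    (memLp_id_gaussianReal (μ := μ) (v := v) 4).integrable_norm_pow (by norm_num)

lemma gaussianFourthMoment_pos : 0 < gaussianFourthMoment := by
  have := nullSingletonClass_gaussianReal (μ := 0) one_ne_zero
  have hsupp : Function.support (fun x : ℝ => x ^ 4) = {0}ᶜ := by ext; simp
  rw [gaussianFourthMoment, integral_pos_iff_support_of_nonneg (fun x => by positivity)
    (integrable_pow_four_gaussianReal 0 1), hsupp, measure_compl (measurableSet_singleton 0)
    (measure_ne_top _ _)]
  simp

lemma lintegral_pow_four_gaussianReal (v : ℝ≥0) :
    ∫⁻ x, ENNReal.ofReal (x ^ 4) ∂gaussianReal 0 v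
      = ENNReal.ofReal ((v : ℝ) ^ 2 * gaussianFourthMoment) := by
  rw [← ofReal_integral_eq_lintegral_ofReal (integrable_pow_four_gaussianReal 0 v)
    (ae_of_all _ fun x => by positivity)]
  congr 1
  have hmap := gaussianReal_map_const_mul (μ := 0) (v := 1) √v
  have hv : NNReal.mk (√(v : ℝ) ^ 2) (sq_nonneg _) = v := NNReal.eq (Real.sq_sqrt v.coe_nonneg)
  rw [mul_zero, mul_one, hv] at hmap
  rw [← hmap, integral_map (by fun_prop) (by fun_prop), gaussianFourthMoment,
    ← integral_const_mul]
  congr 1 with x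
  rw [mul_pow, show √(v : ℝ) ^ 4 = (√(v : ℝ) ^ 2) ^ 2 by ring, Real.sq_sqrt v.coe_nonneg]

end Gaussian

section FractionalBrownianMotion

variable {Ω : Type*} [MeasurableSpace Ω] {H : ℝ} {P : Measure Ω} {b : Ω → ℝ → ℝ}
  {t₁ t₂ : ℝ}

lemma IsFBM.map_const_mul_sub (hb : IsFBM H P b) (hH : 0 < H) (ht₁ : 0 ≤ t₁) (h12 : t₁ ≤ t₂)
    (c : ℝ) :
    P.map (fun ω => c * (b ω t₂ - b ω t₁))
      = gaussianReal 0 (c ^ 2 * (t₂ - t₁) ^ (2 * H)).toNNReal := by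
  have hlaw := hb.2.2 2 ![t₂, t₁] (fun i => by fin_cases i <;> simp [ht₁, ht₁.trans h12]) ![c, -c]
  have h2H : 2 * H ≠ 0 := by positivity
  simp only [Fin.sum_univ_two, Matrix.cons_val_zero, Matrix.cons_val_one, RH, sub_self,
    abs_zero, Real.zero_rpow h2H, abs_of_nonneg (sub_nonneg.2 h12), abs_sub_comm t₁ t₂] at hlaw
  convert hlaw using 3 <;> ring

lemma IsFBM.lintegral_const_mul_sub_pow_four (hb : IsFBM H P b) (hH : 0 < H) (ht₁ : 0 ≤ t₁)
    (h12 : t₁ ≤ t₂) (c : ℝ) :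
    ∫⁻ ω, ENNReal.ofReal ((c * (b ω t₂ - b ω t₁)) ^ 4) ∂P
      = ENNReal.ofReal (c ^ 4 * (t₂ - t₁) ^ (4 * H) * gaussianFourthMoment) := by
  have hsub : 0 ≤ t₂ - t₁ := sub_nonneg.2 h12
  have hX : Measurable fun ω => c * (b ω t₂ - b ω t₁) :=
    ((hb.2.1 t₂).sub (hb.2.1 t₁)).const_mul c
  rw [← lintegral_map (f := fun x => ENNReal.ofReal (x ^ 4)) (by fun_prop) hX,
    hb.map_const_mul_sub hH ht₁ h12, lintegral_pow_four_gaussianReal,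
    Real.coe_toNNReal _ (by positivity)]
  congr 2
  rw [mul_pow, ← pow_mul, ← Real.rpow_natCast ((t₂ - t₁) ^ (2 * H)), ← Real.rpow_mul hsub]
  ring_nf

end FractionalBrownianMotion

section MatrixFBM

open Matrix

variable {Ω : Type*} {n : ℕ} {b : Fin n → Fin n → Ω → ℝ → ℝ}

lemma fbmMatrix_isHermitian (ω : Ω) (t : ℝ) : (fbmMatrix n b ω t).IsHermitian := by
  ext i j
  simp only [fbmMatrix, conjTranspose_apply, Matrix.smul_apply, of_apply, star_trivial, smul_eq_mul]
  rcases lt_trichotomy i j with h | rfl | h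
  · simp [h, h.ne, h.ne', h.not_gt]
  · rfl
  · simp [h, h.ne, h.ne', h.not_gt]

lemma fbmMatrix_sub_apply_eq (t₁ t₂ : ℝ) (i j : Fin n) :
    ∃ k l : Fin n, k ≤ l ∧ ∃ c : ℝ, c ^ 4 ≤ 4 / n ^ 2 ∧
      ∀ ω, (fbmMatrix n b ω t₂ - fbmMatrix n b ω t₁) i j = c * (b k l ω t₂ - b k l ω t₁) := by
  have hscale : (√(n : ℝ))⁻¹ ^ 4 = 1 / n ^ 2 := by
    rw [inv_pow, show √(n : ℝ) ^ 4 = (√(n : ℝ) ^ 2) ^ 2 by ring, Real.sq_sqrt n.cast_nonneg]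
    ring
  have hle : (√(n : ℝ))⁻¹ ^ 4 ≤ 4 / n ^ 2 := by
    rw [hscale]; gcongr; norm_num
  simp only [fbmMatrix, Matrix.sub_apply, Matrix.smul_apply, of_apply, smul_eq_mul]
  rcases lt_trichotomy i j with h | rfl | h
  · exact ⟨i, j, h.le, _, hle, fun ω => by simp only [h, h.ne, if_true, if_false]; ring⟩
  · refine ⟨i, i, le_rfl, (√(n : ℝ))⁻¹ * √2, le_of_eq ?_, fun ω => by simp only [if_true]; ring⟩
    rw [mul_pow, hscale, show √(2 : ℝ) ^ 4 = (√2 ^ 2) ^ 2 by ring, Real.sq_sqrt zero_le_two]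
    ring
  · exact ⟨j, i, h.le, _, hle, fun ω => by simp only [h.ne', h.not_gt, if_false]; ring⟩

variable [MeasurableSpace Ω] {H : ℝ} {P : Measure Ω} {t₁ t₂ : ℝ}

lemma IsMatrixFBM.measurable_fbmMatrix_sub_apply (hb : IsMatrixFBM H n P b) (i j : Fin n) :
    Measurable fun ω => (fbmMatrix n b ω t₂ - fbmMatrix n b ω t₁) i j := by
  obtain ⟨k, l, hkl, c, -, hD⟩ := fbmMatrix_sub_apply_eq (b := b) t₁ t₂ i j
  simp only [hD]
  exact (((hb.1 k l hkl).2.1 t₂).sub ((hb.1 k l hkl).2.1 t₁)).const_mul c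

lemma IsMatrixFBM.lintegral_fbmMatrix_sub_apply_pow_four_le (hb : IsMatrixFBM H n P b)
    (hH : 0 < H) (ht₁ : 0 ≤ t₁) (h12 : t₁ ≤ t₂) (M : ℝ) (i j : Fin n) :
    ∫⁻ ω, ENNReal.ofReal ((M * (fbmMatrix n b ω t₂ - fbmMatrix n b ω t₁) i j) ^ 4) ∂P
      ≤ ENNReal.ofReal (4 / n ^ 2 * M ^ 4 * (t₂ - t₁) ^ (4 * H) * gaussianFourthMoment) := by
  obtain ⟨k, l, hkl, c, hc, hD⟩ := fbmMatrix_sub_apply_eq (b := b) t₁ t₂ i j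
  simp only [hD, ← mul_assoc]
  rw [(hb.1 k l hkl).lintegral_const_mul_sub_pow_four hH ht₁ h12]
  have hK := gaussianFourthMoment_pos
  gcongr
  rw [mul_pow, mul_comm]
  gcongr

end MatrixFBM

/-- For `H ∈ (1/2,1)` there is a constant `C > 0`, independent of `n`,
such that for all `n ≥ 1`, all `f ∈ C¹` with derivative bounded by `M`, and all
`0 ≤ t₁ ≤ t₂`, `E[|⟨μ_{t₂}^{(n)},f⟩ - ⟨μ_{t₁}^{(n)},f⟩|⁴] ≤ C M⁴ |t₂-t₁|^{4H}`. -/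
theorem empirical_increment_fourth_moment
    (H : ℝ) (hH : H ∈ Set.Ioo (1/2 : ℝ) 1) :
    ∃ C : ℝ, 0 < C ∧
      ∀ (n : ℕ), 1 ≤ n → ∀ (Ω : Type) [MeasurableSpace Ω] (P : Measure Ω),
        IsProbabilityMeasure P →
        ∀ b : Fin n → Fin n → Ω → ℝ → ℝ, IsMatrixFBM H n P b →
        ∀ f f' : ℝ → ℝ, (∀ x, HasDerivAt f (f' x) x) → Continuous f' →
        ∀ M : ℝ, (∀ x, |f' x| ≤ M) →
        ∀ t₁ t₂ : ℝ, 0 ≤ t₁ → t₁ ≤ t₂ →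
          ∫⁻ ω, ENNReal.ofReal
              (|(n : ℝ)⁻¹ * ∑ i, f (eigs (fbmMatrix n b ω t₂) i)
                - (n : ℝ)⁻¹ * ∑ i, f (eigs (fbmMatrix n b ω t₁) i)| ^ 4) ∂P
            ≤ ENNReal.ofReal (C * M ^ 4 * (t₂ - t₁) ^ (4 * H)) := by
  refine ⟨4 * gaussianFourthMoment, mul_pos four_pos gaussianFourthMoment_pos, ?_⟩
  intro n hn Ω _ P _ b hb f f' hf _ M hM t₁ t₂ ht₁ h12
  have hH0 : 0 < H := by linarith [hH.1]
  calc _ ≤ ∑ i, ∑ j,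
        ∫⁻ ω, ENNReal.ofReal ((M * (fbmMatrix n b ω t₂ - fbmMatrix n b ω t₁) i j) ^ 4) ∂P :=
        lintegral_pow_four_linearStatistic_sub_le (fun ω => fbmMatrix_isHermitian ω t₂)
          (fun ω => fbmMatrix_isHermitian ω t₁) hb.measurable_fbmMatrix_sub_apply hf hM
    _ ≤ ∑ i : Fin n, ∑ j : Fin n,
        ENNReal.ofReal (4 / n ^ 2 * M ^ 4 * (t₂ - t₁) ^ (4 * H) * gaussianFourthMoment) := by
        gcongr with i _ j _
        exact hb.lintegral_fbmMatrix_sub_apply_pow_four_le hH0 ht₁ h12 M i j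
    _ = _ := by
        have hn0 : (n : ℝ) ≠ 0 := by positivity
        simp only [Finset.sum_const, Finset.card_univ, Fintype.card_fin, nsmul_eq_mul]
        rw [← ENNReal.ofReal_natCast, ← ENNReal.ofReal_mul (by positivity),
          ← ENNReal.ofReal_mul (by positivity)]
        congr 1
        field_simp

end
end

section
/- Let σ² > 0 and let sc(σ²) be the semicircle law of variance σ². For z ∈ ℂ with Im z > 0, define the Cauchy–Stieltjes transform G(z) = ∫_ℝ (x − z)^{−1} sc(σ²)(dx). Then G(z) satisfies the quadratic equation σ²·G(z)² + z·G(z) + 1 = 0 and Im G(z) > 0; moreover, G(z) is the unique complex number w with σ²w² + zw + 1 = 0 and Im w > 0. -/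
open MeasureTheory ProbabilityTheory Filter Topology Real
open scoped ENNReal NNReal

noncomputable section

/-!
Substituting `x = 2√v cos θ` and using the symmetry `θ ↦ 2π - θ` turns `G` into
`(2π√v)⁻¹ ∫₀^{2π} sin²θ / (cos θ - z/(2√v)) dθ`, which for `ζ = e^{iθ}` is a contour
integral of a rational function over the unit circle. Write `z = √v (w + w⁻¹)` with `|w| < 1`
(Joukowski); the poles are `0`, `w` and `w⁻¹`, only the first two lie inside the circle, and
their residues give `G = -w/√v`. The roots of `v X² + z X + 1` are `-w/√v` and `-w⁻¹/√v`, and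
`Im w < 0`, so `G` is the root in the upper half-plane.
-/

open Metric Set intervalIntegral

section
variable {E : Type*} [NormedAddCommGroup E] [NormedSpace ℝ E]

theorem integral_zero_two_pi_eq_two_smul_of_symm {F : ℝ → E} (hF : ∀ θ, F (2 * π - θ) = F θ)
    (hint : IntervalIntegrable F volume 0 (2 * π)) :
    ∫ θ in 0..2 * π, F θ = (2 : ℝ) • ∫ θ in 0..π, F θ := by
  have hπ : π ∈ uIcc 0 (2 * π) := mem_uIcc_of_le pi_pos.le (by linarith [pi_pos])
  have hrefl : ∫ θ in π..2 * π, F θ = ∫ θ in 0..π, F θ := by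
    have h := integral_comp_sub_left F (2 * π) (a := 0) (b := π)
    simp only [hF, sub_zero, show 2 * π - π = π by ring] at h
    exact h.symm
  rw [← integral_add_adjacent_intervals (hint.mono_set (uIcc_subset_uIcc left_mem_uIcc hπ))
    (hint.mono_set (uIcc_subset_uIcc hπ right_mem_uIcc)), hrefl, two_smul]

theorem integral_sqrt_sq_sub_sq_smul {a : ℝ} (ha : 0 ≤ a) (g : ℝ → E) :
    ∫ x in -a..a, √(a ^ 2 - x ^ 2) • g x =
      ∫ θ in 0..π, (a * sin θ) ^ 2 • g (a * cos θ) := by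
  have hsub := integral_deriv_smul_comp_of_deriv_nonpos (a := 0) (b := π)
    (f := fun θ => a * cos θ) (f' := fun θ => -(a * sin θ))
    (g := fun x => √(a ^ 2 - x ^ 2) • g x) (by fun_prop)
    (fun θ _ => by simpa using (hasDerivAt_cos θ).const_mul a)
    (fun θ hθ => by
      rw [min_eq_left pi_pos.le, max_eq_right pi_pos.le] at hθ
      exact neg_nonpos.mpr (mul_nonneg ha (sin_nonneg_of_nonneg_of_le_pi hθ.1.le hθ.2.le)))
  simp only [Function.comp_apply, cos_zero, cos_pi, mul_one, mul_neg] at hsub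
  rw [integral_symm, ← hsub, ← intervalIntegral.integral_neg]
  refine integral_congr fun θ hθ => ?_
  rw [uIcc_of_le pi_pos.le] at hθ
  have hsin : 0 ≤ a * sin θ := mul_nonneg ha (sin_nonneg_of_nonneg_of_le_pi hθ.1 hθ.2)
  have hsq : a ^ 2 - (a * cos θ) ^ 2 = (a * sin θ) ^ 2 := by
    rw [mul_pow, mul_pow, sin_sq]; ring
  rw [hsq, sqrt_sq hsin, smul_smul, ← neg_smul, neg_mul, neg_neg, sq]

theorem integral_semicircle {v : ℝ} (hv : 0 < v) (g : ℝ → E) :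
    ∫ x, g x ∂semicircle v =
      ∫ x in -(2 * √v)..2 * √v, (√(4 * v - x ^ 2) / (2 * π * v)) • g x := by
  have hρ : Measurable fun x : ℝ => ENNReal.ofReal (√(4 * v - x ^ 2) / (2 * π * v)) := by
    fun_prop
  rw [semicircle, if_neg hv.not_ge, withDensity_indicator measurableSet_Icc,
    integral_withDensity_eq_integral_toReal_smul hρ (ae_of_all _ fun _ => ENNReal.ofReal_lt_top),
    integral_Icc_eq_integral_Ioc, ← integral_of_le (by linarith [sqrt_nonneg v])]
  refine integral_congr fun x _ => ?_
  rw [ENNReal.toReal_ofReal (by positivity)]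

end

section
open Complex

theorem exists_joukowski_preimage_of_im_pos {c : ℂ} (hc : 0 < c.im) :
    ∃ w : ℂ, w ≠ 0 ∧ ‖w‖ < 1 ∧ w.im < 0 ∧ (w + w⁻¹) / 2 = c := by
  have im_eq {w : ℂ} (hwc : (w + w⁻¹) / 2 = c) : w.im - w.im / normSq w = 2 * c.im := by
    rw [← hwc]; simp [inv_im]; ring
  have norm_lt {w : ℂ} (hw : w ≠ 0) (hwc : (w + w⁻¹) / 2 = c) (him : w.im < 0) : ‖w‖ < 1 := by
    have hN : 0 < normSq w := normSq_pos.mpr hw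
    have h := im_eq hwc
    rw [← sq_lt_one_iff₀ (norm_nonneg w), ← normSq_eq_norm_sq]
    field_simp at h
    nlinarith
  obtain ⟨s, hs⟩ := IsAlgClosed.exists_eq_mul_self (c ^ 2 - 1)
  have hroot : (c + s) * (c - s) = 1 := by linear_combination hs
  have hw₀ : c + s ≠ 0 := left_ne_zero_of_mul_eq_one hroot
  have hsum : (c + s + (c + s)⁻¹) / 2 = c := by
    rw [← (eq_inv_of_mul_eq_one_right hroot)]; ring
  have hsum' : ((c + s)⁻¹ + (c + s)⁻¹⁻¹) / 2 = c := by rw [inv_inv, add_comm, hsum]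
  rcases lt_or_ge (c + s).im 0 with him | him
  · exact ⟨c + s, hw₀, norm_lt hw₀ hsum him, him, hsum⟩
  · have him' : ((c + s)⁻¹).im < 0 := by
      have h := im_eq hsum
      have hpos : 0 < (c + s).im := him.lt_of_ne fun h0 => by
        rw [← h0] at h; simp at h; linarith
      rw [inv_im, neg_div, neg_lt_zero]
      exact div_pos hpos (normSq_pos.mpr hw₀)
    exact ⟨_, inv_ne_zero hw₀, norm_lt (inv_ne_zero hw₀) hsum' him', him', hsum'⟩

theorem circleIntegral_sub_inv_of_notMem_closedBall {c w : ℂ} {R : ℝ} (hR : 0 ≤ R)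
    (hw : w ∉ closedBall c R) : ∮ z in C(c, R), (z - w)⁻¹ = 0 := by
  have hne : ∀ z ∈ closedBall c R, z - w ≠ 0 := fun z hz h => hw (sub_eq_zero.mp h ▸ hz)
  refine circleIntegral_eq_zero_of_differentiable_on_off_countable hR countable_empty
    ((continuousOn_id.sub continuousOn_const).inv₀ hne) fun z hz => ?_
  exact (differentiableAt_id.sub_const w).inv (hne z (ball_subset_closedBall hz.1))

theorem circleIntegral_partialFractions {w : ℂ} (hw0 : w ≠ 0) (hw : ‖w‖ < 1) (a b : ℂ) :
    ∮ ζ in C(0, 1), (1 + a * ζ⁻¹ + (ζ ^ 2)⁻¹ + b * ((ζ - w)⁻¹ - (ζ - w⁻¹)⁻¹)) =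
      2 * π * I * (a + b) := by
  have hw' : w⁻¹ ∉ closedBall (0 : ℂ) 1 := by
    rw [mem_closedBall_zero_iff, norm_inv, not_le]
    exact one_lt_inv_iff₀.mpr ⟨norm_pos_iff.mpr hw0, hw⟩
  have hi1 : CircleIntegrable (fun _ : ℂ => (1 : ℂ)) 0 1 := circleIntegrable_const 1 0 1
  have hi0 : CircleIntegrable (fun ζ : ℂ => ζ⁻¹) 0 1 := by
    simpa using circleIntegrable_sub_inv_iff (c := 0) (w := 0) (R := 1)
  have hi2 : CircleIntegrable (fun ζ : ℂ => (ζ ^ 2)⁻¹) 0 1 := by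
    simpa using circleIntegrable_sub_zpow_iff (c := 0) (w := 0) (R := 1) (n := -2)
  have hiw : CircleIntegrable (fun ζ : ℂ => (ζ - w)⁻¹) 0 1 := by simp [hw.ne]
  have hiw' : CircleIntegrable (fun ζ : ℂ => (ζ - w⁻¹)⁻¹) 0 1 := by simp [hw.ne]
  have hia : CircleIntegrable (fun ζ : ℂ => a * ζ⁻¹) 0 1 := hi0.const_smul
  have hib : CircleIntegrable (fun ζ : ℂ => b * ((ζ - w)⁻¹ - (ζ - w⁻¹)⁻¹)) 0 1 :=
    (hiw.sub hiw').const_smul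
  have hi1a : CircleIntegrable (fun ζ : ℂ => 1 + a * ζ⁻¹) 0 1 := hi1.add hia
  have hi1a2 : CircleIntegrable (fun ζ : ℂ => 1 + a * ζ⁻¹ + (ζ ^ 2)⁻¹) 0 1 := hi1a.add hi2
  have h1 : ∮ _ in C(0, 1), (1 : ℂ) = 0 := by
    simpa using circleIntegral.integral_sub_zpow_of_ne (n := 0) (by norm_num) 0 0 1
  have h2 : ∮ ζ in C(0, 1), (ζ ^ 2)⁻¹ = 0 := by
    simpa using circleIntegral.integral_sub_zpow_of_ne (n := -2) (by norm_num) 0 0 1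
  have h0 : ∮ ζ in C(0, 1), ζ⁻¹ = 2 * π * I := by
    simpa using circleIntegral.integral_sub_center_inv 0 one_ne_zero
  rw [circleIntegral.integral_add hi1a2 hib, circleIntegral.integral_add hi1a hi2,
    circleIntegral.integral_add hi1 hia, circleIntegral.integral_const_mul,
    circleIntegral.integral_const_mul, circleIntegral.integral_sub hiw hiw', h0, h1, h2,
    circleIntegral.integral_sub_inv_of_mem_ball (mem_ball_zero_iff.mpr hw),
    circleIntegral_sub_inv_of_notMem_closedBall zero_le_one hw']
  ring

theorem exp_ofReal_mul_I_sub_ne_zero {w : ℂ} (hw : ‖w‖ ≠ 1) (θ : ℝ) : exp (θ * I) - w ≠ 0 :=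
  sub_ne_zero.mpr fun h => hw (h ▸ norm_exp_ofReal_mul_I θ)

theorem ofReal_cos_sub_joukowski (θ : ℝ) {w : ℂ} (hw : w ≠ 0) :
    (Real.cos θ : ℂ) - (w + w⁻¹) / 2 =
      (exp (θ * I) - w) * (exp (θ * I) - w⁻¹) / (2 * exp (θ * I)) := by
  rw [ofReal_cos, Complex.cos, neg_mul, Complex.exp_neg]
  field_simp
  ring

theorem ofReal_cos_sub_joukowski_ne_zero {w : ℂ} (hw0 : w ≠ 0) (hw : ‖w‖ < 1) (θ : ℝ) :
    (Real.cos θ : ℂ) - (w + w⁻¹) / 2 ≠ 0 := by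
  rw [ofReal_cos_sub_joukowski θ hw0]
  have hw' : ‖w⁻¹‖ ≠ 1 := by rw [norm_inv]; exact inv_ne_one.mpr hw.ne
  exact div_ne_zero (mul_ne_zero (exp_ofReal_mul_I_sub_ne_zero hw.ne θ)
    (exp_ofReal_mul_I_sub_ne_zero hw' θ)) (mul_ne_zero two_ne_zero (exp_ne_zero _))

theorem integral_sin_sq_div_cos_sub_joukowski {w : ℂ} (hw0 : w ≠ 0) (hw : ‖w‖ < 1) :
    ∫ θ in 0..2 * π, (Real.sin θ : ℂ) ^ 2 / (Real.cos θ - (w + w⁻¹) / 2) = -(2 * π * w) := by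
  -- `f` is the partial-fraction decomposition of `sin²θ / (cos θ - (w + w⁻¹)/2) / (iζ)`.
  set f : ℂ → ℂ := fun ζ =>
    I / 2 * (1 + (w + w⁻¹) * ζ⁻¹ + (ζ ^ 2)⁻¹ + (w - w⁻¹) * ((ζ - w)⁻¹ - (ζ - w⁻¹)⁻¹))
  have hf (θ : ℝ) : (Real.sin θ : ℂ) ^ 2 / (Real.cos θ - (w + w⁻¹) / 2) =
      deriv (circleMap 0 1) θ • f (circleMap 0 1 θ) := by
    have hζ : circleMap 0 1 θ = exp (θ * I) := by simp [circleMap]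
    have hζw : exp (θ * I) - w ≠ 0 := exp_ofReal_mul_I_sub_ne_zero hw.ne θ
    have hζw' : exp (θ * I) * w - 1 ≠ 0 := by
      rw [show exp (θ * I) * w - 1 = (exp (θ * I) - w⁻¹) * w by field_simp]
      refine mul_ne_zero (exp_ofReal_mul_I_sub_ne_zero ?_ θ) hw0
      rw [norm_inv]; exact inv_ne_one.mpr hw.ne
    rw [ofReal_cos_sub_joukowski θ hw0, deriv_circleMap, hζ, ofReal_sin, Complex.sin, neg_mul,
      Complex.exp_neg, smul_eq_mul]
    simp only [f]
    field_simp
    ring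
  calc _ = ∮ ζ in C(0, 1), f ζ := integral_congr fun θ _ => hf θ
    _ = -(2 * π * w) := by
      rw [circleIntegral.integral_const_mul, circleIntegral_partialFractions hw0 hw]
      linear_combination (2 * π * w) * I_sq

theorem integral_sqrt_sq_sub_sq_smul_inv_sub_joukowski {a : ℝ} (ha : 0 < a) {w : ℂ} (hw0 : w ≠ 0)
    (hw : ‖w‖ < 1) :
    ∫ x in -a..a, √(a ^ 2 - x ^ 2) • ((x : ℂ) - a * ((w + w⁻¹) / 2))⁻¹ = -(π * a * w) := by
  set F : ℝ → ℂ := fun θ => (Real.sin θ : ℂ) ^ 2 / (Real.cos θ - (w + w⁻¹) / 2)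
  have hF : ∀ θ, (a * Real.sin θ) ^ 2 • (((a * Real.cos θ : ℝ) : ℂ) - a * ((w + w⁻¹) / 2))⁻¹ =
      a • F θ := by
    intro θ
    simp only [F, Complex.real_smul]
    push_cast
    field_simp
  have hsymm : ∀ θ, F (2 * π - θ) = F θ := by
    intro θ
    simp only [F, Real.sin_two_pi_sub, Real.cos_two_pi_sub, Complex.ofReal_neg, neg_sq]
  have hcont : Continuous F :=
    (by fun_prop : Continuous fun θ : ℝ => (Real.sin θ : ℂ) ^ 2).div (by fun_prop)
      (ofReal_cos_sub_joukowski_ne_zero hw0 hw)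
  have hfold := integral_zero_two_pi_eq_two_smul_of_symm hsymm (hcont.intervalIntegrable _ _)
  rw [integral_sin_sq_div_cos_sub_joukowski hw0 hw] at hfold
  have hhalf : ∫ θ in 0..π, F θ = -(π * w) := by
    rw [Complex.real_smul] at hfold
    push_cast at hfold
    linear_combination -hfold / 2
  rw [integral_sqrt_sq_sub_sq_smul ha.le, integral_congr fun θ _ => hF θ,
    intervalIntegral.integral_smul, hhalf, Complex.real_smul]
  ring

theorem eq_of_quadratic_eq_zero_of_im_pos {v : ℝ} (hv : 0 < v) {z r s : ℂ}
    (hr : v * r ^ 2 + z * r + 1 = 0) (hs : v * s ^ 2 + z * s + 1 = 0) (hr' : 0 < r.im)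
    (hs' : 0 < s.im) : r = s := by
  by_contra hne
  have hsum : v * (r + s) + z = 0 :=
    (mul_eq_zero.mp (by linear_combination hr - hs : (r - s) * (v * (r + s) + z) = 0)).resolve_left
      (sub_ne_zero.mpr hne)
  have hs_eq : s = (v * r)⁻¹ := eq_inv_of_mul_eq_one_right (by linear_combination r * hsum - hr)
  have : s.im < 0 := by
    rw [hs_eq, inv_im, im_ofReal_mul, neg_div, neg_lt_zero]
    exact div_pos (mul_pos hv hr') (normSq_pos.mpr (mul_ne_zero (ofReal_ne_zero.mpr hv.ne')
      fun h => by simp [h] at hr'))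
  linarith

theorem semicircle_stieltjes_joukowski {v : ℝ} (hv : 0 < v) {w : ℂ} (hw0 : w ≠ 0) (hw : ‖w‖ < 1) :
    ∫ x, ((x : ℂ) - √v * (w + w⁻¹))⁻¹ ∂semicircle v = -w / √v := by
  have hσ : 0 < √v := sqrt_pos.mpr hv
  have h4v : 4 * v = (2 * √v) ^ 2 := by rw [mul_pow, sq_sqrt hv.le]; ring
  have hpt (x : ℝ) : (√(4 * v - x ^ 2) / (2 * π * v)) • ((x : ℂ) - √v * (w + w⁻¹))⁻¹ =
      (2 * π * v)⁻¹ •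
        (√((2 * √v) ^ 2 - x ^ 2) • ((x : ℂ) - (2 * √v : ℝ) * ((w + w⁻¹) / 2))⁻¹) := by
    rw [h4v, smul_smul, div_eq_inv_mul]
    push_cast
    ring_nf
  rw [integral_semicircle hv, integral_congr fun x _ => hpt x, intervalIntegral.integral_smul,
    integral_sqrt_sq_sub_sq_smul_inv_sub_joukowski (by positivity) hw0 hw, real_smul]
  have hσC : (√v : ℂ) ≠ 0 := ofReal_ne_zero.mpr hσ.ne'
  have hv' : (v : ℂ) = (√v : ℂ) ^ 2 := by rw [← ofReal_pow, sq_sqrt hv.le]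
  push_cast
  rw [hv']
  field_simp
end

/-- The Cauchy–Stieltjes transform `G(z) = ∫ (x-z)⁻¹ sc(σ²)(dx)` of the
semicircle law of variance `σ² > 0` satisfies `σ²G(z)² + zG(z) + 1 = 0` and `Im G(z) > 0`,
and it is the unique such root of this quadratic in the upper half-plane. -/
theorem semicircle_stieltjes_quadratic
    (v : ℝ) (hv : 0 < v) (z : ℂ) (hz : 0 < z.im)
    (G : ℂ) (hG : G = ∫ x : ℝ, ((x : ℂ) - z)⁻¹ ∂(semicircle v)) :
    (v : ℂ) * G ^ 2 + z * G + 1 = 0 ∧ 0 < G.im ∧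
      ∀ w : ℂ, (v : ℂ) * w ^ 2 + z * w + 1 = 0 → 0 < w.im → w = G := by
  have hσ : 0 < √v := sqrt_pos.mpr hv
  have hσC : (√v : ℂ) ≠ 0 := Complex.ofReal_ne_zero.mpr hσ.ne'
  obtain ⟨w, hw0, hw, hwim, hwz⟩ := exists_joukowski_preimage_of_im_pos (c := z / (2 * √v : ℝ))
    (by rw [Complex.div_ofReal_im]; positivity)
  have hz' : z = √v * (w + w⁻¹) := by
    rw [div_eq_iff two_ne_zero] at hwz
    rw [hwz]; push_cast; field_simp
  have hGw : G = -w / √v := by rw [hG, hz']; exact semicircle_stieltjes_joukowski hv hw0 hw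
  have hquad : (v : ℂ) * G ^ 2 + z * G + 1 = 0 := by
    have hv' : (v : ℂ) = (√v : ℂ) ^ 2 := by rw [← Complex.ofReal_pow, sq_sqrt hv.le]
    rw [hGw, hz', hv']
    field_simp
    ring
  have him : 0 < G.im := by
    rw [hGw, Complex.div_ofReal_im, Complex.neg_im]
    exact div_pos (neg_pos.mpr hwim) hσ
  exact ⟨hquad, him, fun w' hw' hw'im => eq_of_quadratic_eq_zero_of_im_pos hv hw' hquad hw'im him⟩
end
end
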